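/- arXiv:2107.02923 — 2 statements merged into one kernel-verified Lean document; each statement's English description precedes it below -/
import Mathlib

section
/- The number of ordered commuting pairs in H_{2n+1}(p) is p^{2n+1}(p^{2n}+p-1); equivalently, the probability that two independent uniform elements of H_{2n+1}(p) commute equals (p^{2n}+p-1)/p^{2n+1}. -/
open Finset

/-- The underlying set of the Heisenberg group `H_{2n+1}(p)`:
triples `[x, y, z]` with `x, y ∈ 𝔽_p^n` and `z ∈ 𝔽_p`. -/
abbrev Heis (p n : ℕ) : Type := (Fin n → ZMod p) × (Fin n → ZMod p) × ZMod p

namespace Heis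

variable {p n : ℕ}

/-- Dot product on `𝔽_p^n`. -/
def dot (x y : Fin n → ZMod p) : ZMod p := ∑ i, x i * y i

lemma dot_add_left (x y z : Fin n → ZMod p) : dot (x + y) z = dot x z + dot y z := by
  simp [dot, add_mul, Finset.sum_add_distrib]

lemma dot_add_right (x y z : Fin n → ZMod p) : dot x (y + z) = dot x y + dot x z := by
  simp [dot, mul_add, Finset.sum_add_distrib]

lemma dot_neg_left (x y : Fin n → ZMod p) : dot (-x) y = - dot x y := by
  simp [dot]

lemma dot_neg_right (x y : Fin n → ZMod p) : dot x (-y) = - dot x y := by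
  simp [dot]

lemma dot_zero_left (y : Fin n → ZMod p) : dot (0 : Fin n → ZMod p) y = 0 := by
  simp [dot]

lemma dot_zero_right (x : Fin n → ZMod p) : dot x (0 : Fin n → ZMod p) = 0 := by
  simp [dot]

instance : Mul (Heis p n) :=
  ⟨fun g h => (g.1 + h.1, g.2.1 + h.2.1, g.2.2 + h.2.2 + dot g.1 h.2.1)⟩

instance : One (Heis p n) := ⟨(0, 0, 0)⟩

instance : Inv (Heis p n) :=
  ⟨fun g => (-g.1, -g.2.1, -g.2.2 + dot g.1 g.2.1)⟩

lemma mul_def (g h : Heis p n) :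
    g * h = (g.1 + h.1, g.2.1 + h.2.1, g.2.2 + h.2.2 + dot g.1 h.2.1) := rfl

lemma one_def : (1 : Heis p n) = (0, 0, 0) := rfl

lemma inv_def (g : Heis p n) : g⁻¹ = (-g.1, -g.2.1, -g.2.2 + dot g.1 g.2.1) := rfl

instance : Group (Heis p n) where
  toMul := instMul
  toOne := instOne
  toInv := instInv
  npow := npowRec
  div a b := a * b⁻¹
  zpow := zpowRec npowRec
  mul_assoc a b c := by
    simp only [mul_def, dot_add_left, dot_add_right, Prod.ext_iff]
    refine ⟨by abel, by abel, by ring⟩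
  one_mul a := by
    simp [mul_def, one_def, dot_zero_left]
  mul_one a := by
    simp [mul_def, one_def, dot_zero_right]
  inv_mul_cancel a := by
    simp only [mul_def, inv_def, one_def, dot_neg_left, Prod.ext_iff]
    refine ⟨by abel, by abel, by ring⟩

end Heis


namespace HeisAux

open Heis

variable {p n : ℕ}

/-- The linear functional `w ↦ dot x w.2 - dot w.1 y`. -/
def phiL (x y : Fin n → ZMod p) :
    ((Fin n → ZMod p) × (Fin n → ZMod p)) →ₗ[ZMod p] ZMod p where
  toFun w := dot x w.2 - dot w.1 y
  map_add' a b := by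
    simp [Prod.fst_add, Prod.snd_add, dot_add_left, dot_add_right]; ring
  map_smul' c w := by
    simp [dot, Prod.smul_fst, Prod.smul_snd, Pi.smul_apply, smul_eq_mul,
      Finset.mul_sum, mul_sub, mul_left_comm]
    exact Finset.sum_congr rfl fun i _ => by ring

lemma dot_single (x : Fin n → ZMod p) (i : Fin n) :
    dot x (Pi.single i 1) = x i := by
  simp [dot, Pi.single_apply, mul_ite, Finset.sum_ite_eq']

lemma dot_single_left (y : Fin n → ZMod p) (i : Fin n) :
    dot (Pi.single i 1) y = y i := by
  simp [dot, Pi.single_apply, ite_mul, Finset.sum_ite_eq']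

lemma phiL_surj (hp : p.Prime) {x y : Fin n → ZMod p} (h : ¬(x = 0 ∧ y = 0)) :
    Function.Surjective (phiL x y) := by
  haveI := Fact.mk hp
  obtain ⟨a, ha⟩ : ∃ a, phiL x y a ≠ 0 := by
    rcases not_and_or.mp h with hx | hy
    · obtain ⟨i, hi⟩ := Function.ne_iff.mp hx
      refine ⟨((0 : Fin n → ZMod p), Pi.single i 1), ?_⟩
      simpa [phiL, dot_single, dot_zero_left] using hi
    · obtain ⟨i, hi⟩ := Function.ne_iff.mp hy
      refine ⟨(Pi.single i 1, (0 : Fin n → ZMod p)), ?_⟩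
      simpa [phiL, dot_single_left, dot_zero_right] using hi
  intro c
  refine ⟨(c * (phiL x y a)⁻¹) • a, ?_⟩
  rw [map_smul, smul_eq_mul]
  field_simp

lemma cardVV (hp : p.Prime) :
    Nat.card ((Fin n → ZMod p) × (Fin n → ZMod p)) = p ^ (2 * n) := by
  haveI := Fact.mk hp
  rw [Nat.card_prod, Nat.card_fun, Nat.card_zmod, Nat.card_eq_fintype_card, Fintype.card_fin,
    ← pow_add, two_mul]

lemma card_fiber (hp : p.Prime) (hn : 1 ≤ n) {x y : Fin n → ZMod p}
    (h : ¬(x = 0 ∧ y = 0)) :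
    Nat.card {u : (Fin n → ZMod p) × (Fin n → ZMod p) // dot x u.2 = dot u.1 y} =
      p ^ (2 * n - 1) := by
  haveI := Fact.mk hp
  set f := (phiL x y).toAddMonoidHom with hf
  have hsurj : Function.Surjective f := phiL_surj hp h
  have e1 : {u : (Fin n → ZMod p) × (Fin n → ZMod p) // dot x u.2 = dot u.1 y} ≃
      {u // u ∈ f.ker} :=
    Equiv.subtypeEquivRight fun u => by
      simp [f, AddMonoidHom.mem_ker, phiL, LinearMap.coe_mk, sub_eq_zero, eq_comm]
  have hq : Nat.card (((Fin n → ZMod p) × (Fin n → ZMod p)) ⧸ f.ker) = p := by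
    rw [Nat.card_congr (QuotientAddGroup.quotientKerEquivOfSurjective f hsurj).toEquiv,
      Nat.card_zmod]
  have key := AddSubgroup.card_eq_card_quotient_mul_card_addSubgroup f.ker
  rw [hq] at key
  rw [cardVV hp] at key
  rw [Nat.card_congr e1]
  have hpow : p ^ (2 * n) = p * p ^ (2 * n - 1) := by
    rw [← pow_succ']
    congr 1
    omega
  rw [hpow] at key
  exact (Nat.eq_of_mul_eq_mul_left hp.pos key.symm)

/-- Reorganize a pair of Heisenberg elements. -/
def split : Heis p n × Heis p n ≃
    (ZMod p × ZMod p) ×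
      (((Fin n → ZMod p) × (Fin n → ZMod p)) × ((Fin n → ZMod p) × (Fin n → ZMod p))) where
  toFun x := ((x.1.2.2, x.2.2.2), ((x.1.1, x.1.2.1), (x.2.1, x.2.2.1)))
  invFun w := ((w.2.1.1, w.2.1.2, w.1.1), (w.2.2.1, w.2.2.2, w.1.2))
  left_inv x := rfl
  right_inv w := rfl

/-- Drop the first component when the predicate only involves the second. -/
def dropFst {A B : Type*} (q : B → Prop) : {w : A × B // q w.2} ≃ A × {b // q b} where
  toFun w := (w.1.1, ⟨w.1.2, w.2⟩)
  invFun x := ⟨(x.1, x.2.1), x.2.2⟩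
  left_inv w := rfl
  right_inv x := rfl

lemma comm_iff (g h : Heis p n) :
    g * h = h * g ↔ dot g.1 h.2.1 = dot h.1 g.2.1 := by
  constructor
  · intro he
    have h3 := congrArg (fun t : Heis p n => t.2.2) he
    simp only [Heis.mul_def] at h3
    rwa [add_comm g.2.2 h.2.2, add_right_inj] at h3
  · intro hd
    simp only [Heis.mul_def, Prod.mk.injEq]
    exact ⟨add_comm _ _, add_comm _ _, by rw [add_comm g.2.2 h.2.2, add_right_inj]; exact hd⟩

end HeisAux

/-- The number of ordered commuting pairs in `H_{2n+1}(p)` is `p^{2n+1}(p^{2n}+p-1)`;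
equivalently, the probability that two independent uniform elements commute is
`(p^{2n}+p-1)/p^{2n+1}`. -/
theorem heis_commuting_pairs (p n : ℕ) (hp : p.Prime) (hn : 1 ≤ n) :
    Nat.card {x : Heis p n × Heis p n // x.1 * x.2 = x.2 * x.1} =
      p ^ (2 * n + 1) * (p ^ (2 * n) + p - 1) ∧
    (Nat.card {x : Heis p n × Heis p n // x.1 * x.2 = x.2 * x.1} : ℚ) /
        (Nat.card (Heis p n) : ℚ) ^ 2 =
      ((p : ℚ) ^ (2 * n) + p - 1) / (p : ℚ) ^ (2 * n + 1) := by
  haveI := Fact.mk hp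
  have hcard : Nat.card {x : Heis p n × Heis p n // x.1 * x.2 = x.2 * x.1} =
      p ^ (2 * n + 1) * (p ^ (2 * n) + p - 1) := by
    open Heis HeisAux in
    have E : {x : Heis p n × Heis p n // x.1 * x.2 = x.2 * x.1} ≃
        (ZMod p × ZMod p) ×
          Σ v : (Fin n → ZMod p) × (Fin n → ZMod p),
            {u : (Fin n → ZMod p) × (Fin n → ZMod p) // dot v.1 u.2 = dot u.1 v.2} :=
      (HeisAux.split.subtypeEquiv (fun x => HeisAux.comm_iff x.1 x.2)).trans
        ((HeisAux.dropFst _).trans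
          (Equiv.prodCongr (Equiv.refl _)
            (Equiv.subtypeProdEquivSigmaSubtype
              (fun v u : (Fin n → ZMod p) × (Fin n → ZMod p) =>
                dot v.1 u.2 = dot u.1 v.2))))
    rw [Nat.card_congr E, Nat.card_prod, Nat.card_prod, Nat.card_zmod]
    open Heis HeisAux in
    have hsig : Nat.card (Σ v : (Fin n → ZMod p) × (Fin n → ZMod p),
        {u : (Fin n → ZMod p) × (Fin n → ZMod p) // dot v.1 u.2 = dot u.1 v.2}) =
        ∑ v : (Fin n → ZMod p) × (Fin n → ZMod p),
          Nat.card {u : (Fin n → ZMod p) × (Fin n → ZMod p) // dot v.1 u.2 = dot u.1 v.2} := by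
      rw [Nat.card_eq_fintype_card, Fintype.card_sigma]
      exact Finset.sum_congr rfl fun v _ => (Nat.card_eq_fintype_card).symm
    rw [hsig]
    open Heis HeisAux in
    have hsum : ∑ v : (Fin n → ZMod p) × (Fin n → ZMod p),
        Nat.card {u : (Fin n → ZMod p) × (Fin n → ZMod p) // dot v.1 u.2 = dot u.1 v.2} =
        (p ^ (2 * n) - 1) * p ^ (2 * n - 1) + p ^ (2 * n) := by
      rw [Finset.sum_eq_sum_sdiff_singleton_add
        (Finset.mem_univ (0 : (Fin n → ZMod p) × (Fin n → ZMod p)))]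
      have h0 : Nat.card {u : (Fin n → ZMod p) × (Fin n → ZMod p) //
          dot ((0 : (Fin n → ZMod p) × (Fin n → ZMod p)).1) u.2 =
            dot u.1 ((0 : (Fin n → ZMod p) × (Fin n → ZMod p)).2)} = p ^ (2 * n) := by
        rw [Nat.card_congr (Equiv.subtypeUnivEquiv fun u => by
          simp [dot_zero_left, dot_zero_right]), cardVV hp]
      rw [h0]
      have hrest : ∀ v ∈ (Finset.univ \ {(0 : (Fin n → ZMod p) × (Fin n → ZMod p))}),
          Nat.card {u : (Fin n → ZMod p) × (Fin n → ZMod p) // dot v.1 u.2 = dot u.1 v.2} =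
            p ^ (2 * n - 1) := by
        intro v hv
        rw [Finset.mem_sdiff, Finset.mem_singleton] at hv
        refine card_fiber hp hn ?_
        rintro ⟨h1, h2⟩
        exact hv.2 (Prod.ext h1 h2)
      rw [Finset.sum_congr rfl hrest, Finset.sum_const, smul_eq_mul,
        Finset.card_sdiff_of_subset (by simp), Finset.card_singleton, Finset.card_univ,
        ← Nat.card_eq_fintype_card, HeisAux.cardVV hp]
    rw [hsum]
    have hpow : p ^ (2 * n) = p ^ (2 * n - 1) * p := by
      rw [← pow_succ]; congr 1; omega
    have hpow1 : p ^ (2 * n + 1) = p ^ (2 * n - 1) * p * p := by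
      rw [← pow_succ, ← pow_succ]; congr 1; omega
    set a := p ^ (2 * n - 1) with ha
    rw [hpow, hpow1]
    have h1 : 1 ≤ a * p := Nat.mul_pos (pow_pos hp.pos _) hp.pos
    have h2 : 1 ≤ a * p + p := le_trans h1 (Nat.le_add_right _ _)
    zify [h1, h2]
    ring
  have hH : Nat.card (Heis p n) = p ^ (2 * n + 1) := by
    rw [show (Heis p n) = ((Fin n → ZMod p) × (Fin n → ZMod p) × ZMod p) from rfl,
      Nat.card_eq_fintype_card, Fintype.card_prod, Fintype.card_prod, Fintype.card_fun,
      ZMod.card, Fintype.card_fin, ← pow_succ, ← pow_add]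
    congr 1
    omega
  refine ⟨hcard, ?_⟩
  rw [hcard, hH]
  have h0 : (p : ℚ) ≠ 0 := Nat.cast_ne_zero.mpr hp.pos.ne'
  have hle : 1 ≤ p ^ (2 * n) + p := le_trans hp.one_lt.le (Nat.le_add_left _ _)
  rw [Nat.cast_mul, Nat.cast_sub hle]
  push_cast
  field_simp
end

section
/- The edge density of the commuting graph of H_{2k+1}(p) (with loops, counting ordered pairs) equals 1/p + (p-1)/p^{2k+1}; in particular it lies strictly between 1/p and 1/p + 1/p^{2k}. -/
/-- The edge density (with loops, counting ordered pairs) of the commuting graph of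
`H_{2k+1}(p)` equals `1/p + (p-1)/p^{2k+1}`, which lies strictly between `1/p` and
`1/p + 1/p^{2k}`. -/
theorem heis_commuting_density (p k : ℕ) (hp : p.Prime) (hk : 1 ≤ k) :
    ((p : ℚ) ^ (2 * k + 1) * ((p : ℚ) ^ (2 * k) + p - 1)) / ((p : ℚ) ^ (2 * k + 1)) ^ 2 =
        1 / p + ((p : ℚ) - 1) / (p : ℚ) ^ (2 * k + 1) ∧
    1 / (p : ℚ) < 1 / p + ((p : ℚ) - 1) / (p : ℚ) ^ (2 * k + 1) ∧
    1 / p + ((p : ℚ) - 1) / (p : ℚ) ^ (2 * k + 1) < 1 / (p : ℚ) + 1 / (p : ℚ) ^ (2 * k) := by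
  have hp0 : (0 : ℚ) < p := by exact_mod_cast hp.pos
  have hp1 : (1 : ℚ) < p := by exact_mod_cast hp.one_lt
  have hpow : (0 : ℚ) < (p : ℚ) ^ (2 * k + 1) := pow_pos hp0 _
  refine ⟨?_, ?_, ?_⟩
  · field_simp
    ring
  · have : (0 : ℚ) < ((p : ℚ) - 1) / (p : ℚ) ^ (2 * k + 1) :=
      div_pos (by linarith) hpow
    linarith
  · have h : ((p : ℚ) - 1) / (p : ℚ) ^ (2 * k + 1) < 1 / (p : ℚ) ^ (2 * k) := by
      rw [div_lt_div_iff₀ hpow (pow_pos hp0 _)]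
      have : (p : ℚ) ^ (2 * k + 1) = (p : ℚ) ^ (2 * k) * p := by ring
      rw [this]
      have h2 : (0 : ℚ) < (p : ℚ) ^ (2 * k) := pow_pos hp0 _
      nlinarith
    linarith
end
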